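/- arXiv:1302.0450 — 2 statements merged into one kernel-verified Lean document; each statement's English description precedes it below -/
import Mathlib

section
/- Let L be an n×n symmetric matrix and for an index i let [L]ᵢ denote the principal submatrix obtained by deleting row and column i. Then for consecutive indices i and i+1, the difference [L]_{i+1} − [L]_i is a matrix of rank at most 2; specifically [L]_{i+1} − [L]_i = eᵢ ξᵀ + ξ eᵢᵀ for a suitable vector ξ depending on the entries of rows i and i+1 of L. -/
/-!
Deleting row and column `i + 1` instead of `i` changes only the row and the column of the
submatrix at position `i`, so the difference `D` of the two principal submatrices is a symmetric
matrix supported on row `i` and column `i`. Any such matrix equals `eᵢ ξᵀ + ξ eᵢᵀ`, where `ξ` is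
row `i` of `D` with its diagonal entry halved, since that entry is counted twice.
-/

open Matrix

theorem Fin.succAbove_succ_eq_succAbove_castSucc {n : ℕ} {i j : Fin n} (h : j ≠ i) :
    i.succ.succAbove j = i.castSucc.succAbove j := by
  rcases lt_or_gt_of_ne h with h | h
  · rw [succAbove_succ_of_le _ _ h.le, succAbove_castSucc_of_lt _ _ h]
  · rw [succAbove_succ_of_lt _ _ h, succAbove_castSucc_of_le _ _ h.le]

namespace Matrix

variable {ι m R : Type*}

theorem submatrix_sub_submatrix_apply_eq_zero [AddGroup R] (A : Matrix m m R) {f g : ι → m}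
    {i : ι} (hfg : ∀ j, j ≠ i → f j = g j) {j k : ι} (hj : j ≠ i) (hk : k ≠ i) :
    (A.submatrix f f - A.submatrix g g) j k = 0 := by
  simp [hfg j hj, hfg k hk]

theorem eq_vecMulVec_single_add_vecMulVec_single [DecidableEq ι] [Field R] [NeZero (2 : R)]
    {D : Matrix ι ι R} (hD : D.IsSymm) {i : ι} (hDi : ∀ j k, j ≠ i → k ≠ i → D j k = 0) :
    D = vecMulVec (Pi.single i 1) (Function.update (D i) i (D i i / 2)) +
      vecMulVec (Function.update (D i) i (D i i / 2)) (Pi.single i 1) := by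
  ext j k
  have hDji : D j i = D i j := hD.apply i j
  by_cases hj : j = i <;> by_cases hk : k = i
  · subst hj hk
    simp [vecMulVec_apply, add_halves]
  · subst hj
    simp [vecMulVec_apply, hk]
  · subst hk
    simp [vecMulVec_apply, hj, hDji]
  · simp [vecMulVec_apply, hj, hk, hDi j k hj hk]

end Matrix

theorem consecutive_principal_submatrix_diff_rank_two {n : ℕ}
    (L : Matrix (Fin (n + 1)) (Fin (n + 1)) ℝ) (hL : L.IsSymm) (i : Fin n) :
    ∃ ξ : Fin n → ℝ,
      L.submatrix (i.succ).succAbove (i.succ).succAbove -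
          L.submatrix (i.castSucc).succAbove (i.castSucc).succAbove =
        Matrix.vecMulVec (Pi.single i 1) ξ + Matrix.vecMulVec ξ (Pi.single i 1) := by
  have hsymm := (hL.submatrix i.succ.succAbove).sub (hL.submatrix i.castSucc.succAbove)
  have hagree : ∀ j, j ≠ i → i.succ.succAbove j = i.castSucc.succAbove j :=
    fun _ => Fin.succAbove_succ_eq_succAbove_castSucc
  exact ⟨_, eq_vecMulVec_single_add_vecMulVec_single hsymm fun _ _ hj hk =>
    submatrix_sub_submatrix_apply_eq_zero L hagree hj hk⟩
end

section
/- With the notation of the Schur complement formula above, suppose L_l − L₀ L_f⁻¹ L₀ᵀ is symmetric positive semidefinite and D = t·I with t → ∞. Then S_t := L_l + t·I − L₀ L_f⁻¹ L₀ᵀ is invertible for large t, ‖S_t⁻¹‖ → 0, and hence trace(L⁻¹(t)) → trace(L_f⁻¹) as t → ∞, where L(t) = [[L_l + t I, L₀],[L₀ᵀ, L_f]]. -/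
/-!
The Schur complement of `Lf` in `L(t)` is `M + t • 1` with `M = Ll - L0 * Lf⁻¹ * L0ᵀ` fixed, and
`(M + t • 1)⁻¹ = t⁻¹ • (t⁻¹ • M + 1)⁻¹ → 0` because the inverse is continuous at `1`. By the block
inversion formula, `trace L(t)⁻¹ = trace Lf⁻¹ + trace ((M + t • 1)⁻¹ * K)` for a matrix `K` that does
not depend on `t`, so it tends to `trace Lf⁻¹`.
-/
open Matrix Filter Topology

namespace Matrix

theorem trace_fromBlocks {m n R : Type*} [Fintype m] [Fintype n] [AddCommMonoid R]
    (A : Matrix m m R) (B : Matrix m n R) (C : Matrix n m R) (D : Matrix n n R) :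
    (fromBlocks A B C D).trace = A.trace + D.trace := by
  simp [trace, Fintype.sum_sum_type]

theorem trace_inv_fromBlocks_of_isUnit_det₂₂ {m n α : Type*} [Fintype m] [Fintype n]
    [DecidableEq m] [DecidableEq n] [CommRing α]
    {A : Matrix m m α} {B : Matrix m n α} {C : Matrix n m α} {D : Matrix n n α}
    (hD : IsUnit D.det) (hS : IsUnit (A - B * D⁻¹ * C).det) :
    (fromBlocks A B C D)⁻¹.trace =
      D⁻¹.trace + ((A - B * D⁻¹ * C)⁻¹ * (1 + B * D⁻¹ * D⁻¹ * C)).trace := by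
  let := invertibleOfIsUnitDet D hD
  let : Invertible (A - B * ⅟D * C) := by
    rw [invOf_eq_nonsing_inv]; exact invertibleOfIsUnitDet _ hS
  let := fromBlocks₂₂Invertible A B C D
  rw [← invOf_eq_nonsing_inv, invOf_fromBlocks₂₂_eq, trace_fromBlocks]
  simp only [invOf_eq_nonsing_inv, Matrix.mul_add, Matrix.mul_one, trace_add]
  set S := (A - B * D⁻¹ * C)⁻¹
  have hcycle : (D⁻¹ * C * S * B * D⁻¹).trace = (S * (B * D⁻¹ * D⁻¹ * C)).trace := by
    rw [show D⁻¹ * C * S * B * D⁻¹ = (D⁻¹ * C) * (S * B * D⁻¹) by simp only [Matrix.mul_assoc],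
      trace_mul_comm]
    simp only [Matrix.mul_assoc]
  rw [hcycle]
  ring

section AddSmulOne

variable {n : Type*} [DecidableEq n] (M : Matrix n n ℝ)

theorem add_smul_one_eq_smul {t : ℝ} (ht : t ≠ 0) :
    M + t • (1 : Matrix n n ℝ) = t • (t⁻¹ • M + 1) := by
  rw [smul_add, smul_smul, mul_inv_cancel₀ ht, one_smul]

theorem tendsto_inv_smul_add_one_atTop :
    Tendsto (fun t : ℝ => t⁻¹ • M + 1) atTop (𝓝 1) := by
  simpa using ((tendsto_inv_atTop_zero (𝕜 := ℝ)).smul_const M).add_const (1 : Matrix n n ℝ)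

variable [Fintype n]

theorem eventually_isUnit_det_inv_smul_add_one :
    ∀ᶠ t : ℝ in atTop, IsUnit (t⁻¹ • M + 1).det := by
  have hdet : Tendsto (fun t : ℝ => (t⁻¹ • M + 1).det) atTop (𝓝 1) := by
    simpa [Function.comp_def] using
      (continuous_id.matrix_det.tendsto 1).comp (tendsto_inv_smul_add_one_atTop M)
  filter_upwards [hdet.eventually_ne one_ne_zero] with t h
  exact h.isUnit

theorem eventually_isUnit_det_add_smul_one :
    ∀ᶠ t : ℝ in atTop, IsUnit (M + t • (1 : Matrix n n ℝ)).det := by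
  filter_upwards [eventually_isUnit_det_inv_smul_add_one M, eventually_ne_atTop 0] with t h ht
  rw [add_smul_one_eq_smul M ht, det_smul]
  exact (isUnit_iff_ne_zero.2 (pow_ne_zero _ ht)).mul h

theorem tendsto_inv_add_smul_one_atTop :
    Tendsto (fun t : ℝ => (M + t • (1 : Matrix n n ℝ))⁻¹) atTop (𝓝 0) := by
  have hinv : Tendsto (fun t : ℝ => (t⁻¹ • M + 1)⁻¹) atTop (𝓝 1) := by
    have : ContinuousAt Inv.inv (1 : Matrix n n ℝ) := continuousAt_matrix_inv _ (by simp)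
    simpa [Function.comp_def] using this.tendsto.comp (tendsto_inv_smul_add_one_atTop M)
  have hsmul : Tendsto (fun t : ℝ => t⁻¹ • (t⁻¹ • M + 1)⁻¹) atTop (𝓝 0) := by
    simpa using tendsto_inv_atTop_zero.smul hinv
  refine hsmul.congr' ?_
  filter_upwards [eventually_isUnit_det_inv_smul_add_one M, eventually_ne_atTop 0] with t h ht
  rw [add_smul_one_eq_smul M ht]
  exact (inv_smul' _ (Units.mk0 t ht) h).symm

end AddSmulOne

theorem tendsto_trace_inv_fromBlocks_add_smul_one {m n : Type*} [Fintype m] [Fintype n]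
    [DecidableEq m] [DecidableEq n] (A : Matrix m m ℝ) (B : Matrix m n ℝ) (C : Matrix n m ℝ)
    {D : Matrix n n ℝ} (hD : IsUnit D.det) :
    Tendsto (fun t : ℝ => (fromBlocks (A + t • (1 : Matrix m m ℝ)) B C D)⁻¹.trace)
      atTop (𝓝 D⁻¹.trace) := by
  have hschur (t : ℝ) : A + t • (1 : Matrix m m ℝ) - B * D⁻¹ * C = (A - B * D⁻¹ * C) + t • 1 := by
    abel
  have hlim := tendsto_inv_add_smul_one_atTop (A - B * D⁻¹ * C)
  have hrhs : Tendsto (fun t : ℝ => D⁻¹.trace +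
      ((A - B * D⁻¹ * C + t • 1)⁻¹ * (1 + B * D⁻¹ * D⁻¹ * C)).trace) atTop (𝓝 D⁻¹.trace) := by
    simpa [Function.comp_def] using ((continuous_const.add
      (continuous_id.matrix_mul continuous_const).matrix_trace).tendsto 0).comp hlim
  refine hrhs.congr' ?_
  filter_upwards [eventually_isUnit_det_add_smul_one (A - B * D⁻¹ * C)] with t ht
  rw [trace_inv_fromBlocks_of_isUnit_det₂₂ hD (by rwa [hschur]), hschur]

end Matrix

theorem trace_inv_tendsto_noise_free_general {p q : ℕ}
    (Ll : Matrix (Fin p) (Fin p) ℝ)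
    (L0 : Matrix (Fin p) (Fin q) ℝ)
    (Lf : Matrix (Fin q) (Fin q) ℝ) (hLf : Lf.PosDef) :
    (∀ᶠ t : ℝ in atTop, IsUnit (Ll + t • (1 : Matrix (Fin p) (Fin p) ℝ) - L0 * Lf⁻¹ * L0ᵀ).det) ∧
    Tendsto (fun t : ℝ => (Ll + t • (1 : Matrix (Fin p) (Fin p) ℝ) - L0 * Lf⁻¹ * L0ᵀ)⁻¹)
      atTop (𝓝 0) ∧
    Tendsto (fun t : ℝ =>
        ((Matrix.fromBlocks (Ll + t • (1 : Matrix (Fin p) (Fin p) ℝ)) L0 L0ᵀ Lf)⁻¹).trace)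
      atTop (𝓝 (Lf⁻¹).trace) := by
  have hschur (t : ℝ) : Ll + t • (1 : Matrix (Fin p) (Fin p) ℝ) - L0 * Lf⁻¹ * L0ᵀ =
      (Ll - L0 * Lf⁻¹ * L0ᵀ) + t • 1 := by
    abel
  simp only [hschur]
  exact ⟨eventually_isUnit_det_add_smul_one _, tendsto_inv_add_smul_one_atTop _,
    tendsto_trace_inv_fromBlocks_add_smul_one Ll L0 L0ᵀ hLf.det_pos.ne'.isUnit⟩

theorem trace_inv_tendsto_noise_free {p q : ℕ}
    (Ll : Matrix (Fin p) (Fin p) ℝ) (hLl : Ll.IsSymm)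
    (L0 : Matrix (Fin p) (Fin q) ℝ)
    (Lf : Matrix (Fin q) (Fin q) ℝ) (hLf : Lf.PosDef)
    (hPSD : (Ll - L0 * Lf⁻¹ * L0ᵀ).PosSemidef) :
    (∀ᶠ t : ℝ in atTop, IsUnit (Ll + t • (1 : Matrix (Fin p) (Fin p) ℝ) - L0 * Lf⁻¹ * L0ᵀ).det) ∧
    Tendsto (fun t : ℝ => (Ll + t • (1 : Matrix (Fin p) (Fin p) ℝ) - L0 * Lf⁻¹ * L0ᵀ)⁻¹)
      atTop (𝓝 0) ∧
    Tendsto (fun t : ℝ =>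
        ((Matrix.fromBlocks (Ll + t • (1 : Matrix (Fin p) (Fin p) ℝ)) L0 L0ᵀ Lf)⁻¹).trace)
      atTop (𝓝 (Lf⁻¹).trace) :=
  trace_inv_tendsto_noise_free_general Ll L0 Lf hLf
end
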